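/- Let f be an elimination rule, s = {s_A} a selection rule, δ : ℕ → ℝ, and suppose there is a polynomial p such that for every α > 0 and every n ≥ p(1/α) the following holds: for every voter i ∈ [n] and every α-coarse belief φ there exists a nonempty subset A ⊆ C such that (i) for every P_i ∈ 𝒫, the elimination rule f(P⃗_{-i},P_i) outputs A with probability at least 1 − δ(n), over the randomness of P⃗_{-i} ∼ φ^{n−1} and of f, and (ii) the voting rule s_A is strategy-proof w.r.t. the single belief φ|_A. Then the voting rule v defined by v(P⃗) = s(P⃗|_{f(P⃗)}) is large-scale 2δ-strategy-proof w.r.t. coarse i.i.d. beliefs with rate p. -/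

import Mathlib

open Finset

section VotingPrelims

variable (C : Type) [Fintype C] [DecidableEq C]

/-- A preference ordering over the subset `A` of candidates: a duplicate-free list
enumerating exactly the members of `A`, where earlier entries are more preferred. -/
def PrefOn (A : Finset C) : Type :=
  {l : List C // l.Nodup ∧ l.toFinset = A}

/-- A (full) preference ordering on the whole candidate set. -/
abbrev Pref : Type := PrefOn C Finset.univ

variable {C}

noncomputable instance instFintypePrefOn (A : Finset C) : Fintype (PrefOn C A) :=
  Fintype.subtype A.toList.permutations.toFinset (by
    intro l
    rw [List.mem_toFinset, List.mem_permutations]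
    constructor
    · intro h
      exact ⟨h.nodup_iff.mpr A.nodup_toList,
        by rw [List.toFinset_eq_of_perm _ _ h, Finset.toList_toFinset]⟩
    · rintro ⟨h1, h2⟩
      exact List.perm_of_nodup_nodup_toFinset_eq h1 A.nodup_toList
        (by rw [h2, Finset.toList_toFinset]))

instance instDecidableEqPrefOn (A : Finset C) : DecidableEq (PrefOn C A) := fun P Q =>
  decidable_of_iff (P.1 = Q.1) Subtype.ext_iff.symm

/-- `P.pref x y` means that `x` is strictly preferred to `y` in `P`. -/
def PrefOn.pref {A : Finset C} (P : PrefOn C A) (x y : C) : Prop :=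
  P.1.idxOf x < P.1.idxOf y

theorem Pref.mem_list (P : Pref C) (z : C) : z ∈ P.1 := by
  rw [← List.mem_toFinset, P.2.2]; exact Finset.mem_univ z

/-- The top (most preferred) candidate of a full preference ordering. -/
noncomputable def Pref.top [Nonempty C] (P : Pref C) : C :=
  P.1.head?.getD (Classical.arbitrary C)

/-- The most preferred candidate of `S` according to the full preference `P`. -/
noncomputable def Pref.topOn [Nonempty C] (P : Pref C) (S : Finset C) : C :=
  (P.1.filter (fun z => decide (z ∈ S))).head?.getD (Classical.arbitrary C)

/-- The number of voters whose top choice is `x`. -/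
noncomputable def topCount [Nonempty C] {n : ℕ} (P : Fin n → Pref C) (x : C) : ℕ :=
  (Finset.univ.filter fun i => (P i).top = x).card

/-- The number of voters whose most preferred candidate among `S` is `x`. -/
noncomputable def countTop [Nonempty C] {n : ℕ} (P : Fin n → Pref C) (S : Finset C)
    (x : C) : ℕ :=
  (Finset.univ.filter fun i => (P i).topOn S = x).card

/-- The restriction of a full preference ordering to the subset `A`. -/
def Pref.restrictTo (P : Pref C) (A : Finset C) : PrefOn C A :=
  ⟨P.1.filter (fun z => decide (z ∈ A)), P.2.1.filter _, by
    ext z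
    simp only [List.mem_toFinset, List.mem_filter, decide_eq_true_eq]
    exact ⟨fun h => h.2, fun h => ⟨Pref.mem_list P z, h⟩⟩⟩

/-- `d` is a probability distribution on the candidates. -/
def IsDist (d : C → ℝ) : Prop :=
  (∀ x, 0 ≤ d x) ∧ ∑ x, d x = 1

/-- `d` is a probability distribution on the candidates, supported on `A`. -/
def IsDistOn (A : Finset C) (d : C → ℝ) : Prop :=
  IsDist d ∧ ∀ x ∉ A, d x = 0

/-- `v` is a (randomized) voting rule: it maps every profile to a distribution. -/
def IsVotingRule {A : Finset C} {n : ℕ} (v : (Fin n → PrefOn C A) → C → ℝ) : Prop :=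
  ∀ P, IsDist (v P)

/-- `φ` is a belief, i.e. a probability distribution over preference orderings. -/
def IsBelief {A : Finset C} (φ : PrefOn C A → ℝ) : Prop :=
  (∀ P, 0 ≤ φ P) ∧ ∑ P, φ P = 1

/-- Anonymity: permuting the voters does not change the outcome distribution. -/
def Anonymous {A : Finset C} {n : ℕ} (v : (Fin n → PrefOn C A) → C → ℝ) : Prop :=
  ∀ σ : Equiv.Perm (Fin n), ∀ P : Fin n → PrefOn C A, v (fun i => P (σ i)) = v P

/-- Utilities take values in `[0,1]`. -/
def Utility01 (u : C → ℝ) : Prop := ∀ x, 0 ≤ u x ∧ u x ≤ 1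

/-- The utility function `u` is consistent with the preference ordering `P` on `A`. -/
def ConsistentOn (A : Finset C) (u : C → ℝ) (P : PrefOn C A) : Prop :=
  ∀ x ∈ A, ∀ y ∈ A, (u y < u x ↔ P.pref x y)

/-- The profile in which voter `i` reports `Pi` and the remaining voters report `R`. -/
def combine {A : Finset C} {n : ℕ} (i : Fin n) (Pi : PrefOn C A)
    (R : {j : Fin n // j ≠ i} → PrefOn C A) : Fin n → PrefOn C A :=
  fun j => if h : j = i then Pi else R ⟨j, h⟩

/-- The expected utility of voter `i` when reporting `Pi`, where the remaining `n-1`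
voters' preferences are drawn i.i.d. from the belief `φ`. -/
noncomputable def EU {A : Finset C} {n : ℕ} (v : (Fin n → PrefOn C A) → C → ℝ)
    (u : C → ℝ) (φ : PrefOn C A → ℝ) (i : Fin n) (Pi : PrefOn C A) : ℝ :=
  ∑ R : {j : Fin n // j ≠ i} → PrefOn C A,
    (∏ j, φ (R j)) * ∑ x, v (combine i Pi R) x * u x

/-- Strategy-proofness with respect to a set `Φ` of (i.i.d.) beliefs. -/
def SPwrt {A : Finset C} {n : ℕ} (v : (Fin n → PrefOn C A) → C → ℝ)
    (Φ : Set (PrefOn C A → ℝ)) : Prop :=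
  ∀ i : Fin n, ∀ Pi Pi' : PrefOn C A, ∀ φ ∈ Φ, IsBelief φ →
    ∀ u : C → ℝ, Utility01 u → ConsistentOn A u Pi →
      EU v u φ i Pi' ≤ EU v u φ i Pi

/-- Weak strategy-proofness: strategy-proofness w.r.t. all (i.i.d.) beliefs. -/
def WeaklySP {n : ℕ} (v : (Fin n → Pref C) → C → ℝ) : Prop :=
  SPwrt v Set.univ

/-- `ε`-super-weak unanimity. -/
def SuperWeakUnanimity [Nonempty C] {n : ℕ} (v : (Fin n → Pref C) → C → ℝ) (ε : ℝ) : Prop :=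
  ∀ x : C, ∃ P : Fin n → Pref C, (∀ i, (P i).top = x) ∧ 1 - ε ≤ v P x

/-- `ε`-strong unanimity. -/
def StrongUnanimity [Nonempty C] {n : ℕ} (v : (Fin n → Pref C) → C → ℝ) (ε : ℝ) : Prop :=
  ∀ x : C, ∀ P : Fin n → Pref C, (∀ i, (P i).top = x) → 1 - ε ≤ v P x

/-- `ε`-Pareto efficiency. -/
def ParetoEff {n : ℕ} (v : (Fin n → Pref C) → C → ℝ) (ε : ℝ) : Prop :=
  ∀ x y : C, ∀ P : Fin n → Pref C, (∀ i, (P i).pref x y) → v P y ≤ ε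

/-- An `α`-coarse belief: all probabilities are integer multiples of some `β ≥ α`. -/
def CoarseBelief {A : Finset C} (α : ℝ) (φ : PrefOn C A → ℝ) : Prop :=
  ∃ β : ℝ, α ≤ β ∧ ∀ P, ∃ k : ℤ, φ P = k * β

/-- An `α`-coarse utility function: any two utilities are equal or at least `α` apart. -/
def CoarseUtility (α : ℝ) (u : C → ℝ) : Prop :=
  ∀ x y : C, u x = u y ∨ α ≤ |u x - u y|

/-- Large-scale `ε`-strategy-proofness w.r.t. coarse i.i.d. beliefs, with rate `p`. -/
def LargeScaleSP (v : (n : ℕ) → (Fin n → Pref C) → C → ℝ) (ε : ℕ → ℝ) (p : ℝ → ℝ) : Prop :=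
  ∀ α : ℝ, 0 < α → ∀ n : ℕ, p (1 / α) ≤ (n : ℝ) →
    ∀ i : Fin n, ∀ Pi Pi' : Pref C, ∀ φ : Pref C → ℝ, IsBelief φ → CoarseBelief α φ →
      ∀ u : C → ℝ, Utility01 u → CoarseUtility α u → ConsistentOn Finset.univ u Pi →
        EU (v n) u φ i Pi' - ε n ≤ EU (v n) u φ i Pi

/-- The restriction of a belief to the candidate subset `A`. -/
noncomputable def beliefRestrict (φ : Pref C → ℝ) (A : Finset C) : PrefOn C A → ℝ :=
  fun Q => ∑ P : Pref C, if P.restrictTo A = Q then φ P else 0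

/-- The punishing voting rule: choose a uniform voter, then her `j`-th ranked candidate
with probability proportional to `m - j`. -/
noncomputable def vPunish (n : ℕ) (P : Fin n → Pref C) (x : C) : ℝ :=
  (1 / (n : ℝ)) * ∑ i : Fin n,
    (((Fintype.card C : ℝ) - ((P i).1.idxOf x + 1)) /
      (∑ ℓ ∈ Finset.range (Fintype.card C), ((Fintype.card C : ℝ) - ((ℓ : ℝ) + 1))))

end VotingPrelims

section MorePrelims

variable {C : Type} [Fintype C] [DecidableEq C]

/-- `x` is directly above `y` in the preference ordering `P`. -/
def DirectlyAbove (P : Pref C) (x y : C) : Prop :=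
  P.pref x y ∧ ∀ z : C, z ≠ x → z ≠ y → (P.pref z x ↔ P.pref z y)

/-- The preference obtained from `P` by exchanging the positions of `x` and `y`. -/
def Pref.swapC (P : Pref C) (x y : C) : Pref C :=
  ⟨P.1.map (Equiv.swap x y), P.2.1.map (Equiv.injective _), by
    apply Finset.eq_univ_iff_forall.mpr
    intro z
    rw [List.mem_toFinset, List.mem_map]
    exact ⟨Equiv.swap x y z, Pref.mem_list P _, Equiv.swap_apply_self x y z⟩⟩

/-- Pairwise responsiveness. -/
def PairwiseResponsive {n : ℕ} (v : (Fin n → Pref C) → C → ℝ) : Prop :=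
  ∀ P : Fin n → Pref C, ∀ i : Fin n, ∀ x y : C, DirectlyAbove (P i) x y →
    ∀ z : C, z ≠ x → z ≠ y →
      v (Function.update P i ((P i).swapC x y)) z = v P z

/-- Pairwise isolation. -/
def PairwiseIsolated {n : ℕ} (v : (Fin n → Pref C) → C → ℝ) : Prop :=
  ∀ x y : C, ∀ i : Fin n, ∀ P P' : Fin n → Pref C,
    DirectlyAbove (P i) x y → P' i = P i →
    (∀ j : Fin n, (P j).pref x y ↔ (P' j).pref x y) →
      v (Function.update P' i ((P' i).swapC x y)) y - v P' y
        = v (Function.update P i ((P i).swapC x y)) y - v P y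

/-- The ordering that puts `x` on top, with the rest ordered as in `a`. -/
def prefTopList (a : Pref C) (x : C) : Pref C :=
  ⟨x :: a.1.erase x, by
    rw [List.nodup_cons]
    exact ⟨a.2.1.not_mem_erase, a.2.1.erase x⟩, by
    apply Finset.eq_univ_iff_forall.mpr
    intro z
    rw [List.mem_toFinset, List.mem_cons]
    by_cases hz : z = x
    · exact Or.inl hz
    · exact Or.inr ((List.mem_erase_of_ne hz).mpr (Pref.mem_list a z))⟩

/-- The ordering `a` with `x` moved to the bottom. -/
def prefBotList (a : Pref C) (x : C) : Pref C :=
  ⟨a.1.erase x ++ [x], by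
    rw [List.nodup_append]
    exact ⟨a.2.1.erase x, List.nodup_singleton x,
      fun z hz b hb heq => absurd hz (by
        rw [heq, List.mem_singleton.mp hb]; exact a.2.1.not_mem_erase)⟩, by
    apply Finset.eq_univ_iff_forall.mpr
    intro z
    rw [List.mem_toFinset, List.mem_append, List.mem_singleton]
    by_cases hz : z = x
    · exact Or.inr hz
    · exact Or.inl ((List.mem_erase_of_ne hz).mpr (Pref.mem_list a z))⟩

/-- The profile `P⃗^{x,j}`: the first `j` voters rank `x` first followed by the remaining
candidates in the order `a`; the remaining voters use `a` with `x` moved to the bottom. -/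
def profileXJ (a : Pref C) (x : C) (j : ℕ) (n : ℕ) : Fin n → Pref C :=
  fun i => if (i : ℕ) < j then prefTopList a x else prefBotList a x

/-- `v'(x,j)`: the selection probability of `x` on the profile `P⃗^{x,j}`. -/
def vPrime {n : ℕ} (v : (Fin n → Pref C) → C → ℝ) (a : Pref C) (x : C) (j : ℕ) : ℝ :=
  v (profileXJ a x j n) x

/-- One round of repeated-plurality elimination with margin `T`: keep exactly the
candidates of `S` whose top-choice count is within `T` of the highest count. -/
noncomputable def plStep [Nonempty C] {n : ℕ} (P : Fin n → Pref C) (T : ℝ) (S : Finset C) :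
    Finset C :=
  S.filter (fun x => ((S.sup (countTop P S) : ℕ) : ℝ) ≤ (countTop P S x : ℝ) + T)

/-- The set of remaining candidates after repeated-plurality elimination. -/
noncomputable def plFinal [Nonempty C] {n : ℕ} (P : Fin n → Pref C) (T : ℝ) : Finset C :=
  (fun S => plStep P T S)^[Fintype.card C] Finset.univ

/-- The plurality winner among `S`, with ties broken by `tb`. -/
noncomputable def pluralityWinner [Nonempty C] {n : ℕ} (tb : Finset C → C)
    (P : Fin n → Pref C) (S : Finset C) : C :=
  tb (S.filter (fun x => countTop P S x = S.sup (countTop P S)))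

/-- Repeated Plurality Elimination + Plurality Selection. -/
noncomputable def vPl [Nonempty C] (δ : ℝ) (tb : Finset C → C) (n : ℕ)
    (P : Fin n → Pref C) (x : C) : ℝ :=
  if x = pluralityWinner tb P (plFinal P ((n : ℝ) ^ ((1 : ℝ) / 2 + δ))) then 1 else 0

/-- One round of approximate instant-runoff elimination with margin `T`: eliminate the
candidates of `S` whose top-choice count is within `T` of the least count, unless this
would eliminate everyone. -/
noncomputable def irvStep [Nonempty C] {n : ℕ} (P : Fin n → Pref C) (T : ℝ) (S : Finset C) :
    Finset C :=
  if h : S.Nonempty then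
    let E := S.filter (fun x =>
      (countTop P S x : ℝ) ≤ (((S.image (countTop P S)).min' (h.image _) : ℕ) : ℝ) + T)
    if E = S then S else S \ E
  else S

/-- The set of remaining candidates after approximate instant-runoff elimination. -/
noncomputable def irvFinal [Nonempty C] {n : ℕ} (P : Fin n → Pref C) (T : ℝ) : Finset C :=
  (fun S => irvStep P T S)^[Fintype.card C] Finset.univ

/-- Approximate Instant-Runoff Voting. -/
noncomputable def vIrv [Nonempty C] (δ : ℝ) (tb : Finset C → C) (n : ℕ)
    (P : Fin n → Pref C) (x : C) : ℝ :=
  if x = pluralityWinner tb P (irvFinal P ((n : ℝ) ^ ((1 : ℝ) / 2 + δ))) then 1 else 0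

/-- The position (0-indexed rank) of candidate `x` in the ordering `P`. -/
def Pref.rank (P : Pref C) (x : C) : Fin (Fintype.card C) :=
  ⟨P.1.idxOf x, by
    have hx : x ∈ P.1 := Pref.mem_list P x
    have hlen : P.1.length = Fintype.card C := by
      rw [← List.toFinset_card_of_nodup P.2.1, P.2.2, Finset.card_univ]
    rw [← hlen]
    exact List.idxOf_lt_length_iff.mpr hx⟩

/-- The score of candidate `x` under the positional scoring rule with points vector `pv`. -/
def scoreOf (pv : Fin (Fintype.card C) → ℕ) {n : ℕ} (P : Fin n → Pref C) (x : C) : ℕ :=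
  ∑ i : Fin n, pv ((P i).rank x)

/-- Scoring Rule Elimination + Input-Independent Selection. -/
noncomputable def vScore (δ : ℝ) (pv : Fin (Fintype.card C) → ℕ) (sel : Finset C → C → ℝ)
    (n : ℕ) (P : Fin n → Pref C) (x : C) : ℝ :=
  sel (Finset.univ.filter (fun y =>
    ((Finset.univ.sup (scoreOf pv P) : ℕ) : ℝ) ≤ (scoreOf pv P y : ℝ) + (n : ℝ) ^ ((1 : ℝ) / 2 + δ))) x

end MorePrelims

/-! If, whatever voter `i` reports, the elimination rule outputs `A` with probability at least
`1 - δ`, then her expected utility under the composed rule differs by at most `δ` from her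
expected utility under `s A` played against the restricted belief `φ|_A`, because utilities lie
in `[0,1]`. The restricted belief is the pushforward of `φ` along restriction, so the other
voters' i.i.d. profile restricted to `A` is i.i.d. from `φ|_A`. Since `s A` is strategy-proof
for `φ|_A`, a misreport gains at most `2δ`. -/

theorem List.idxOf_filter_lt_idxOf_filter_iff {α : Type*} [DecidableEq α] (p : α → Bool)
    {x y : α} (hx : p x) (hy : p y) (l : List α) :
    (l.filter p).idxOf x < (l.filter p).idxOf y ↔ l.idxOf x < l.idxOf y := by
  induction l with
  | nil => simp
  | cons a t ih =>
    by_cases hxy : x = y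
    · simp [hxy]
    by_cases hax : a = x
    · subst hax; simp [hx, List.idxOf_cons_ne _ hxy]
    by_cases hay : a = y
    · subst hay; simp [hy, List.idxOf_cons_ne _ hax]
    by_cases hpa : p a <;> simp [hpa, List.idxOf_cons_ne _ hax, List.idxOf_cons_ne _ hay, ih]

theorem abs_sum_mul_sub_le_one_sub {ι : Type*} [Fintype ι] {w g : ι → ℝ}
    (hw : ∀ i, 0 ≤ w i) (hw1 : ∑ i, w i = 1) (hg : ∀ i, w i ≠ 0 → g i ∈ Set.Icc 0 1)
    {a : ι} (ha : g a ∈ Set.Icc 0 1) : |∑ i, w i * g i - g a| ≤ 1 - w a := by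
  classical
  have hterm : ∀ i, 0 ≤ w i * g i ∧ w i * g i ≤ w i := fun i => by
    rcases eq_or_ne (w i) 0 with h | h
    · simp [h]
    · exact ⟨mul_nonneg (hw i) (hg i h).1, mul_le_of_le_one_right (hw i) (hg i h).2⟩
  have hS₀ : 0 ≤ ∑ i ∈ univ.erase a, w i * g i := sum_nonneg fun i _ => (hterm i).1
  have hST : ∑ i ∈ univ.erase a, w i * g i ≤ ∑ i ∈ univ.erase a, w i :=
    sum_le_sum fun i _ => (hterm i).2
  have hT : ∑ i ∈ univ.erase a, w i = 1 - w a := by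
    rw [← hw1, ← add_sum_erase univ w (mem_univ a)]; ring
  rw [← add_sum_erase univ _ (mem_univ a), abs_le]
  constructor <;> nlinarith [ha.1, ha.2, hw a]

theorem sum_pi_prod_eq_one {ι α : Type*} [Fintype ι] [DecidableEq ι] [Fintype α] {φ : α → ℝ}
    (hφ : ∑ a, φ a = 1) : ∑ R : ι → α, ∏ j, φ (R j) = 1 := by
  rw [← Fintype.prod_sum]; simp [hφ]

/-- Pushing an i.i.d. product of `φ` forward along `g` coordinatewise gives the i.i.d. product
of the pushforward of `φ`. -/
theorem sum_pi_prod_mul_comp {ι α β : Type*} [Fintype ι] [DecidableEq ι] [Fintype α]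
    [Fintype β] [DecidableEq β] (g : α → β) (φ : α → ℝ) (F : (ι → β) → ℝ) :
    ∑ R : ι → α, (∏ j, φ (R j)) * F (g ∘ R) =
      ∑ Q : ι → β, (∏ j, ∑ a with g a = Q j, φ a) * F Q := by
  rw [← sum_fiberwise univ (fun R => g ∘ R)]
  refine sum_congr rfl fun Q _ => ?_
  have hfiber : Fintype.piFinset (fun j => univ.filter (g · = Q j)) = univ.filter (g ∘ · = Q) := by
    ext R; simp [funext_iff]
  rw [prod_univ_sum, hfiber, sum_mul]
  exact sum_congr rfl fun R hR => by rw [(mem_filter.1 hR).2]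

section IsDist

variable {C : Type} [Fintype C]

theorem IsDist.sum_mul_mem_Icc {d u : C → ℝ} (hd : IsDist d) (hu : Utility01 u) :
    ∑ x, d x * u x ∈ Set.Icc 0 1 := by
  refine ⟨sum_nonneg fun x _ => mul_nonneg (hd.1 x) (hu x).1, ?_⟩
  calc ∑ x, d x * u x ≤ ∑ x, d x := sum_le_sum fun x _ => mul_le_of_le_one_right (hd.1 x) (hu x).2
    _ = 1 := hd.2

end IsDist

section EliminationSelection

variable {C : Type} [Fintype C] [DecidableEq C]

theorem Pref.restrictTo_pref_iff (P : Pref C) {A : Finset C} {x y : C} (hx : x ∈ A)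
    (hy : y ∈ A) : (P.restrictTo A).pref x y ↔ P.pref x y :=
  List.idxOf_filter_lt_idxOf_filter_iff _ (by simpa using hx) (by simpa using hy) P.1

theorem ConsistentOn.restrictTo {u : C → ℝ} {P : Pref C} (h : ConsistentOn univ u P)
    (A : Finset C) : ConsistentOn A u (P.restrictTo A) := fun x hx y hy =>
  (h x (mem_univ x) y (mem_univ y)).trans (P.restrictTo_pref_iff hx hy).symm

theorem isBelief_beliefRestrict {φ : Pref C → ℝ} (hφ : IsBelief φ) (A : Finset C) :
    IsBelief (beliefRestrict φ A) := by
  refine ⟨fun Q => sum_nonneg fun P _ => ?_, ?_⟩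
  · split_ifs
    exacts [hφ.1 P, le_rfl]
  · unfold beliefRestrict
    rw [sum_comm]
    simpa [sum_ite_eq] using hφ.2

theorem sum_pi_prod_mul_restrictTo {ι : Type*} [Fintype ι] [DecidableEq ι] (φ : Pref C → ℝ)
    (A : Finset C) (F : (ι → PrefOn C A) → ℝ) :
    ∑ R : ι → Pref C, (∏ j, φ (R j)) * F (fun j => (R j).restrictTo A) =
      ∑ Q : ι → PrefOn C A, (∏ j, beliefRestrict φ A (Q j)) * F Q := by
  simp only [beliefRestrict, ← sum_filter]
  exact sum_pi_prod_mul_comp (Pref.restrictTo · A) φ F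

theorem combine_restrictTo {n : ℕ} (i : Fin n) (Pi : Pref C)
    (R : {j : Fin n // j ≠ i} → Pref C) (A : Finset C) :
    (fun j => Pref.restrictTo (combine i Pi R j) A) =
      combine i (Pi.restrictTo A) (fun j => (R j).restrictTo A) := by
  funext j
  by_cases h : j = i <;> simp [combine, h]

theorem sum_pi_prod_mul_utility_restrictTo {n : ℕ} {A : Finset C}
    (v : (Fin n → PrefOn C A) → C → ℝ) (u : C → ℝ) (φ : Pref C → ℝ) (i : Fin n)
    (Pi : Pref C) :
    ∑ R : {j : Fin n // j ≠ i} → Pref C, (∏ j, φ (R j)) *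
        ∑ x, v (fun j => Pref.restrictTo (combine i Pi R j) A) x * u x =
      EU v u (beliefRestrict φ A) i (Pi.restrictTo A) := by
  simp_rw [combine_restrictTo]
  exact sum_pi_prod_mul_restrictTo φ A fun Q => ∑ x, v (combine i (Pi.restrictTo A) Q) x * u x

/-- `v(P) = s(P|_{f(P)})` in the notation of the paper. -/
noncomputable def elimSelect {n : ℕ} (f : (Fin n → Pref C) → Finset C → ℝ)
    (s : (A : Finset C) → (Fin n → PrefOn C A) → C → ℝ) (P : Fin n → Pref C) (x : C) : ℝ :=
  ∑ A, f P A * s A (fun i => (P i).restrictTo A) x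

variable {n : ℕ} {f : (Fin n → Pref C) → Finset C → ℝ}
  {s : (A : Finset C) → (Fin n → PrefOn C A) → C → ℝ}

theorem sum_elimSelect_mul (u : C → ℝ) (P : Fin n → Pref C) :
    ∑ x, elimSelect f s P x * u x =
      ∑ A, f P A * ∑ x, s A (fun i => (P i).restrictTo A) x * u x := by
  simp only [elimSelect, sum_mul, mul_sum, mul_assoc]
  exact sum_comm

theorem abs_sum_elimSelect_mul_sub_le {u : C → ℝ} {A : Finset C} (P : Fin n → Pref C)
    (hf : (∀ B, 0 ≤ f P B) ∧ ∑ B, f P B = 1 ∧ f P ∅ = 0)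
    (hs : ∀ B : Finset C, B.Nonempty → IsVotingRule (s B)) (hu : Utility01 u)
    (hA : A.Nonempty) :
    |∑ x, elimSelect f s P x * u x - ∑ x, s A (fun i => (P i).restrictTo A) x * u x| ≤
      1 - f P A := by
  rw [sum_elimSelect_mul]
  refine abs_sum_mul_sub_le_one_sub hf.1 hf.2.1 (fun B hB => ?_) ((hs A hA _).sum_mul_mem_Icc hu)
  refine (hs B (nonempty_iff_ne_empty.2 ?_) _).sum_mul_mem_Icc hu
  rintro rfl
  exact hB hf.2.2

theorem abs_EU_elimSelect_sub_le {u : C → ℝ} {φ : Pref C → ℝ} {A : Finset C}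
    (hf : ∀ P, (∀ B, 0 ≤ f P B) ∧ ∑ B, f P B = 1 ∧ f P ∅ = 0)
    (hs : ∀ B : Finset C, B.Nonempty → IsVotingRule (s B)) (hφ : IsBelief φ)
    (hu : Utility01 u) (hA : A.Nonempty) (i : Fin n) (Pi : Pref C) :
    |EU (elimSelect f s) u φ i Pi - EU (s A) u (beliefRestrict φ A) i (Pi.restrictTo A)| ≤
      1 - ∑ R : {j : Fin n // j ≠ i} → Pref C, (∏ j, φ (R j)) * f (combine i Pi R) A := by
  have hw : ∀ R : {j : Fin n // j ≠ i} → Pref C, 0 ≤ ∏ j, φ (R j) :=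
    fun R => prod_nonneg fun j _ => hφ.1 _
  rw [← sum_pi_prod_mul_utility_restrictTo, EU, ← sum_sub_distrib]
  simp_rw [← mul_sub]
  calc _ ≤ ∑ R : {j : Fin n // j ≠ i} → Pref C, (∏ j, φ (R j)) * (1 - f (combine i Pi R) A) := by
        refine (abs_sum_le_sum_abs _ _).trans (sum_le_sum fun R _ => ?_)
        rw [abs_mul, abs_of_nonneg (hw R)]
        exact mul_le_mul_of_nonneg_left
          (abs_sum_elimSelect_mul_sub_le _ (hf _) hs hu hA) (hw R)
    _ = _ := by simp_rw [mul_sub, mul_one]; rw [sum_sub_distrib, sum_pi_prod_eq_one hφ.2]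

end EliminationSelection

/-- The general framework: an elimination rule that a coarse-believing
voter believes she cannot influence, followed by a selection rule that is
strategy-proof w.r.t. the restricted belief, yields a voting rule that is large-scale
`2δ`-strategy-proof w.r.t. coarse i.i.d. beliefs, with rate `p`. -/
theorem stmt9 {C : Type} [Fintype C] [DecidableEq C]
    (f : (n : ℕ) → (Fin n → Pref C) → Finset C → ℝ)
    (hf : ∀ (n : ℕ) (P : Fin n → Pref C),
      (∀ A : Finset C, 0 ≤ f n P A) ∧ (∑ A : Finset C, f n P A = 1) ∧ f n P ∅ = 0)
    (s : (A : Finset C) → (n : ℕ) → (Fin n → PrefOn C A) → C → ℝ)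
    (hs : ∀ (A : Finset C), A.Nonempty → ∀ (n : ℕ) (P : Fin n → PrefOn C A),
      IsDistOn A (s A n P))
    (δ : ℕ → ℝ) (p : Polynomial ℝ)
    (hyp : ∀ α : ℝ, 0 < α → ∀ n : ℕ, p.eval (1 / α) ≤ (n : ℝ) →
      ∀ i : Fin n, ∀ φ : Pref C → ℝ, IsBelief φ → CoarseBelief α φ →
        ∃ A : Finset C, A.Nonempty ∧
          (∀ Pi : Pref C,
            1 - δ n ≤ ∑ R : {j : Fin n // j ≠ i} → Pref C,
              (∏ j, φ (R j)) * f n (combine i Pi R) A) ∧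
          SPwrt (s A n) {beliefRestrict φ A}) :
    LargeScaleSP
      (fun n P x => ∑ A : Finset C, f n P A * s A n (fun i => (P i).restrictTo A) x)
      (fun n => 2 * δ n) (fun x => p.eval x) := by
  intro α hα n hn i Pi Pi' φ hφ hφα u hu _ hPi
  obtain ⟨A, hA, hfA, hsA⟩ := hyp α hα n hn i φ hφ hφα
  have hsel : ∀ B : Finset C, B.Nonempty → IsVotingRule (s B n) := fun B hB P => (hs B hB n P).1
  have hPi_close := abs_le.1 (abs_EU_elimSelect_sub_le (hf n) hsel hφ hu hA i Pi)
  have hPi'_close := abs_le.1 (abs_EU_elimSelect_sub_le (hf n) hsel hφ hu hA i Pi')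
  have hsp := hsA i (Pi.restrictTo A) (Pi'.restrictTo A) _ rfl (isBelief_beliefRestrict hφ A) u hu
    (hPi.restrictTo A)
  change EU (elimSelect (f n) (fun A => s A n)) u φ i Pi' - 2 * δ n ≤
    EU (elimSelect (f n) (fun A => s A n)) u φ i Pi
  linarith [hfA Pi, hfA Pi']
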